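/- For every natural number k, the function h_k(x) = e^{x^2/2} (-1)^k (d^k/dx^k) e^{-x^2} satisfies the Hermite differential equation -h_k''(x) + x^2 h_k(x) = (2k+1) h_k(x) for all real x. -/

import Mathlib

/-!
Write `G_k` for the `k`-th derivative of `e^{-x²}`. Differentiating `G_0' = -2x G_0` `k + 1` times
(Leibniz) gives `G_{k+2} = -2x G_{k+1} - 2(k+1) G_k`, i.e. the three-term recurrence
`h_{k+2} = 2x h_{k+1} - 2(k+1) h_k`. The product rule gives the raising relation
`h_k' = x h_k - h_{k+1}`; differentiating it once more and eliminating `h_{k+2}` with the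
recurrence yields the equation.
-/

open Real

/-- The Hermite function `h_k(x) = e^{x²/2} (-1)^k (d/dx)^k e^{-x²}`. -/
noncomputable def hermiteFun (k : ℕ) (x : ℝ) : ℝ :=
  Real.exp (x ^ 2 / 2) * (-1 : ℝ) ^ k * iteratedDeriv k (fun y => Real.exp (-y ^ 2)) x

theorem iteratedDeriv_succ_id_mul {𝕜 : Type*} [NontriviallyNormedField 𝕜] {f : 𝕜 → 𝕜}
    {n : ℕ} (hf : ContDiff 𝕜 (n + 1) f) (x : 𝕜) :
    iteratedDeriv (n + 1) (fun y => y * f y) x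
      = x * iteratedDeriv (n + 1) f x + (n + 1) * iteratedDeriv n f x := by
  rw [iteratedDeriv_fun_mul (f := fun y => y) contDiff_id.contDiffAt hf.contDiffAt,
    Finset.sum_range_succ', Finset.sum_range_succ']
  simp [iteratedDeriv_fun_id, add_comm]

theorem contDiff_exp_neg_sq {n : WithTop ℕ∞} : ContDiff ℝ n fun y : ℝ => Real.exp (-y ^ 2) := by
  fun_prop

theorem deriv_exp_neg_sq :
    deriv (fun y : ℝ => Real.exp (-y ^ 2)) = fun y => -2 * (y * Real.exp (-y ^ 2)) :=
  funext fun y => ((hasDerivAt_pow 2 y).fun_neg.exp).deriv.trans (by push_cast; ring)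

theorem iteratedDeriv_exp_neg_sq_add_two (k : ℕ) (x : ℝ) :
    iteratedDeriv (k + 2) (fun y => Real.exp (-y ^ 2)) x
      = -2 * (x * iteratedDeriv (k + 1) (fun y => Real.exp (-y ^ 2)) x
        + (k + 1) * iteratedDeriv k (fun y => Real.exp (-y ^ 2)) x) := by
  rw [iteratedDeriv_succ', deriv_exp_neg_sq, iteratedDeriv_const_mul_field,
    iteratedDeriv_succ_id_mul contDiff_exp_neg_sq]

theorem hermiteFun_add_two (k : ℕ) (x : ℝ) :
    hermiteFun (k + 2) x = 2 * x * hermiteFun (k + 1) x - 2 * (k + 1) * hermiteFun k x := by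
  simp only [hermiteFun, iteratedDeriv_exp_neg_sq_add_two]
  ring

theorem hasDerivAt_hermiteFun (k : ℕ) (x : ℝ) :
    HasDerivAt (hermiteFun k) (x * hermiteFun k x - hermiteFun (k + 1) x) x := by
  have hexp : HasDerivAt (fun y : ℝ => Real.exp (y ^ 2 / 2)) (Real.exp (x ^ 2 / 2) * x) x := by
    simpa using ((hasDerivAt_pow 2 x).div_const 2).exp
  have hG := (contDiff_exp_neg_sq.differentiable_iteratedDeriv' k x).hasDerivAt
  rw [← iteratedDeriv_succ] at hG
  exact ((hexp.mul_const ((-1 : ℝ) ^ k)).mul hG).congr_deriv (by simp only [hermiteFun]; ring)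

/-- the Hermite function satisfies `-h_k'' + x² h_k = (2k+1) h_k`. -/
theorem hermiteFun_eigen (k : ℕ) (x : ℝ) :
    -(deriv (deriv (hermiteFun k)) x) + x ^ 2 * hermiteFun k x
      = (2 * k + 1 : ℝ) * hermiteFun k x := by
  have hderiv : deriv (hermiteFun k) = fun y => y * hermiteFun k y - hermiteFun (k + 1) y :=
    funext fun y => (hasDerivAt_hermiteFun k y).deriv
  have hderiv2 : deriv (deriv (hermiteFun k)) x = hermiteFun k x
      + x * (x * hermiteFun k x - hermiteFun (k + 1) x)
      - (x * hermiteFun (k + 1) x - hermiteFun (k + 2) x) := by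
    rw [hderiv]
    exact (((hasDerivAt_id x).mul (hasDerivAt_hermiteFun k x)).sub
      (hasDerivAt_hermiteFun (k + 1) x)).deriv.trans (by simp)
  rw [hderiv2, hermiteFun_add_two]
  ring
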